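/- Suppose Y, O^Y, O^M are mutually independent given (A, M). Then P(Y=y, O^M=0, O^Y=1 | A=a) = Σ_{m∈𝓜} P(M=m, Y=y, O^M=1, O^Y=1 | A=a) · P(O^M=0 | M=m, A=a) / P(O^M=1 | M=m, A=a), provided P(O^M=1 | M=m, A=a) > 0 for all m. -/
import Mathlib

open scoped BigOperators Classical

/-- Probability of the event `S` under the weight function `p` on a finite sample space. -/
noncomputable def Pr {Ω : Type*} [Fintype Ω] (p : Ω → ℝ) (S : Ω → Prop) : ℝ :=
  ∑ ω, if S ω then p ω else 0

/-- Conditional probability `P(S | T)` (by convention `0` if `P(T) = 0`). -/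
noncomputable def CPr {Ω : Type*} [Fintype Ω] (p : Ω → ℝ) (S T : Ω → Prop) : ℝ :=
  Pr p (fun ω => S ω ∧ T ω) / Pr p T

/-- Conditional expectation `E[Y | S]` (by convention `0` if `P(S) = 0`). -/
noncomputable def CExp {Ω : Type*} [Fintype Ω] (p : Ω → ℝ) (Y : Ω → ℝ) (S : Ω → Prop) : ℝ :=
  (∑ ω, if S ω then p ω * Y ω else 0) / Pr p S

lemma Pr_congr {Ω : Type*} [Fintype Ω] (p : Ω → ℝ) {S T : Ω → Prop}
    (h : ∀ ω, S ω ↔ T ω) : Pr p S = Pr p T := by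
  unfold Pr; apply Finset.sum_congr rfl; intro ω _; rw [if_congr (h ω) rfl rfl]

lemma Pr_nonneg {Ω : Type*} [Fintype Ω] {p : Ω → ℝ} (hp0 : ∀ ω, 0 ≤ p ω)
    (S : Ω → Prop) : 0 ≤ Pr p S := by
  unfold Pr; apply Finset.sum_nonneg; intro ω _; split <;> simp [hp0 ω]

lemma Pr_fiber {Ω 𝓜 : Type*} [Fintype Ω] [Fintype 𝓜] (p : Ω → ℝ)
    (S : Ω → Prop) (M : Ω → 𝓜) :
    Pr p S = ∑ m : 𝓜, Pr p (fun ω => S ω ∧ M ω = m) := by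
  unfold Pr
  rw [Finset.sum_comm]
  apply Finset.sum_congr rfl; intro ω _
  by_cases h : S ω
  · simp [h]
  · simp [h]

lemma mnar_arith (E0 E1 S0 S1 Q PA : ℝ) (hS1 : S1 ≠ 0) (hQ : Q ≠ 0)
    (key : E0 * S1 = E1 * S0) :
    E0 / PA = E1 / PA * (S0 / Q / (S1 / Q)) := by
  have h1 : S0 / Q / (S1 / Q) = S0 / S1 := by field_simp
  rw [h1, div_mul_eq_mul_div, mul_div_assoc', ← key, mul_div_assoc, div_self hS1, mul_one]

/-- **MNAR mediator integral equation.** If `Y, O^Y, O^M` are mutually independent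
given `(A, M)`, with `P(O^M=1 | M=m, A=a) > 0` for all `m`, then
`P(Y=y, O^M=0, O^Y=1 | A=a)
  = Σ_m P(M=m, Y=y, O^M=1, O^Y=1 | A=a) · P(O^M=0 | M=m, A=a) / P(O^M=1 | M=m, A=a)`. -/
theorem mnar_mediator_integral_equation
    {Ω 𝓐 𝓜 𝓨 : Type*} [Fintype Ω] [Fintype 𝓜] [Fintype 𝓨]
    (p : Ω → ℝ) (hp0 : ∀ ω, 0 ≤ p ω) (hp1 : ∑ ω, p ω = 1)
    (Y : Ω → 𝓨) (M : Ω → 𝓜) (A : Ω → 𝓐) (OY OM : Ω → ℕ)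
    (hOY : ∀ ω, OY ω = 0 ∨ OY ω = 1) (hOM : ∀ ω, OM ω = 0 ∨ OM ω = 1)
    -- mutual conditional independence of Y, O^Y, O^M given (A, M)
    (hCI : ∀ (y : 𝓨) (oy om : ℕ) (a : 𝓐) (m : 𝓜),
      Pr p (fun ω => Y ω = y ∧ OY ω = oy ∧ OM ω = om ∧ A ω = a ∧ M ω = m) *
        Pr p (fun ω => A ω = a ∧ M ω = m) * Pr p (fun ω => A ω = a ∧ M ω = m)
      = Pr p (fun ω => Y ω = y ∧ A ω = a ∧ M ω = m) *
        Pr p (fun ω => OY ω = oy ∧ A ω = a ∧ M ω = m) *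
        Pr p (fun ω => OM ω = om ∧ A ω = a ∧ M ω = m))
    (a : 𝓐)
    (hpos : ∀ m : 𝓜, 0 < CPr p (fun ω => OM ω = 1) (fun ω => M ω = m ∧ A ω = a))
    (y : 𝓨) :
    CPr p (fun ω => Y ω = y ∧ OM ω = 0 ∧ OY ω = 1) (fun ω => A ω = a)
      = ∑ m : 𝓜,
          CPr p (fun ω => M ω = m ∧ Y ω = y ∧ OM ω = 1 ∧ OY ω = 1) (fun ω => A ω = a) *
            (CPr p (fun ω => OM ω = 0) (fun ω => M ω = m ∧ A ω = a) /
              CPr p (fun ω => OM ω = 1) (fun ω => M ω = m ∧ A ω = a)) := by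
  have hQcongr : ∀ m : 𝓜, Pr p (fun ω => M ω = m ∧ A ω = a)
      = Pr p (fun ω => A ω = a ∧ M ω = m) := fun m =>
    Pr_congr p (fun ω => and_comm)
  have hQ : ∀ m : 𝓜, 0 < Pr p (fun ω => A ω = a ∧ M ω = m) := by
    intro m
    rcases lt_or_eq_of_le (Pr_nonneg hp0 (fun ω => A ω = a ∧ M ω = m)) with h | h
    · exact h
    · exfalso
      have hh := hpos m
      rw [CPr, hQcongr m, ← h, div_zero] at hh
      exact lt_irrefl 0 hh
  have hS1 : ∀ m : 𝓜, 0 < Pr p (fun ω => OM ω = 1 ∧ A ω = a ∧ M ω = m) := by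
    intro m
    have h := hpos m
    rw [CPr] at h
    have hnum : 0 < Pr p (fun ω => OM ω = 1 ∧ M ω = m ∧ A ω = a) := by
      by_contra hc
      push_neg at hc
      have := div_nonpos_of_nonpos_of_nonneg hc
        (Pr_nonneg hp0 (fun ω => M ω = m ∧ A ω = a))
      linarith
    calc (0:ℝ) < _ := hnum
      _ = _ := Pr_congr p (fun ω => by tauto)
  have key : ∀ m : 𝓜,
      Pr p (fun ω => Y ω = y ∧ OY ω = 1 ∧ OM ω = 0 ∧ A ω = a ∧ M ω = m) *
        Pr p (fun ω => OM ω = 1 ∧ A ω = a ∧ M ω = m)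
      = Pr p (fun ω => Y ω = y ∧ OY ω = 1 ∧ OM ω = 1 ∧ A ω = a ∧ M ω = m) *
        Pr p (fun ω => OM ω = 0 ∧ A ω = a ∧ M ω = m) := by
    intro m
    have c0 := hCI y 1 0 a m
    have c1 := hCI y 1 1 a m
    set E0 := Pr p (fun ω => Y ω = y ∧ OY ω = 1 ∧ OM ω = 0 ∧ A ω = a ∧ M ω = m)
    set E1 := Pr p (fun ω => Y ω = y ∧ OY ω = 1 ∧ OM ω = 1 ∧ A ω = a ∧ M ω = m)
    set S0 := Pr p (fun ω => OM ω = 0 ∧ A ω = a ∧ M ω = m)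
    set S1 := Pr p (fun ω => OM ω = 1 ∧ A ω = a ∧ M ω = m)
    set Q := Pr p (fun ω => A ω = a ∧ M ω = m)
    set N := Pr p (fun ω => Y ω = y ∧ A ω = a ∧ M ω = m)
    set R := Pr p (fun ω => OY ω = 1 ∧ A ω = a ∧ M ω = m)
    have hq : Q * Q ≠ 0 := (mul_pos (hQ m) (hQ m)).ne'
    apply mul_right_cancel₀ hq
    calc E0 * S1 * (Q * Q) = (E0 * Q * Q) * S1 := by ring
      _ = (N * R * S0) * S1 := by rw [c0]
      _ = (N * R * S1) * S0 := by ring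
      _ = (E1 * Q * Q) * S0 := by rw [c1]
      _ = E1 * S0 * (Q * Q) := by ring
  rw [CPr, Pr_fiber p (fun ω => (Y ω = y ∧ OM ω = 0 ∧ OY ω = 1) ∧ A ω = a) M,
    Finset.sum_div]
  apply Finset.sum_congr rfl
  intro m _
  rw [CPr, CPr, CPr,
    Pr_congr p (show ∀ ω, ((Y ω = y ∧ OM ω = 0 ∧ OY ω = 1) ∧ A ω = a) ∧ M ω = m ↔
      Y ω = y ∧ OY ω = 1 ∧ OM ω = 0 ∧ A ω = a ∧ M ω = m from fun ω => by tauto),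
    Pr_congr p (show ∀ ω, (M ω = m ∧ Y ω = y ∧ OM ω = 1 ∧ OY ω = 1) ∧ A ω = a ↔
      Y ω = y ∧ OY ω = 1 ∧ OM ω = 1 ∧ A ω = a ∧ M ω = m from fun ω => by tauto),
    Pr_congr p (show ∀ ω, OM ω = 0 ∧ M ω = m ∧ A ω = a ↔
      OM ω = 0 ∧ A ω = a ∧ M ω = m from fun ω => by tauto),
    Pr_congr p (show ∀ ω, OM ω = 1 ∧ M ω = m ∧ A ω = a ↔
      OM ω = 1 ∧ A ω = a ∧ M ω = m from fun ω => by tauto),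
    hQcongr m]
  exact mnar_arith _ _ _ _ _ _ (hS1 m).ne' (hQ m).ne' (key m)
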